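/- arXiv:2605.20314 — 5 statements merged into one kernel-verified Lean document; each statement's English description precedes it below -/
import Mathlib

section
/- Let x be uniform on {-1,1}^d with d ≥ 2, y = x₁x₂, Z = y·(xᵀw)², with ‖w‖₂ = 1 and w₁² + w₂² ≤ 1/2. Then Var(Z) ≥ 3/4. -/
open Finset

noncomputable def myeps (b : Bool) : ℝ := if b then 1 else -1
lemma eps_sq (b : Bool) : myeps b * myeps b = 1 := by cases b <;> simp [myeps]
lemma eps_not (b : Bool) : myeps (!b) = - myeps b := by cases b <;> simp [myeps]
lemma eps_update {d : ℕ} (x : Fin d → Bool) (k m : Fin d) :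
    myeps (Function.update x k (!x k) m) = if m = k then -myeps (x m) else myeps (x m) := by
  by_cases h : m = k
  · subst h; simp [eps_not]
  · simp [Function.update_of_ne h, h]
lemma flip_sum {d : ℕ} (k : Fin d) (f : (Fin d → Bool) → ℝ)
    (hf : ∀ x, f (Function.update x k (!x k)) = - f x) :
    ∑ x : Fin d → Bool, f x = 0 := by
  have hinv : Function.Involutive (fun x : Fin d → Bool => Function.update x k (!x k)) := by
    intro x; ext m
    by_cases h : m = k
    · subst h; simp
    · simp [Function.update_of_ne h]
  have key := Equiv.sum_comp (hinv.toPerm _) f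
  have h2 : ∑ x : Fin d → Bool, f ((hinv.toPerm _) x) = ∑ x : Fin d → Bool, - f x :=
    Fintype.sum_congr _ _ (fun x => hf x)
  rw [h2, Finset.sum_neg_distrib] at key
  linarith
lemma card_cube (d : ℕ) : ∑ _x : Fin d → Bool, (1:ℝ) = 2 ^ d := by
  simp [Finset.card_univ]

lemma sum_eps_two {d : ℕ} (i j : Fin d) :
    ∑ x : Fin d → Bool, myeps (x i) * myeps (x j) = if i = j then (2:ℝ)^d else 0 := by
  by_cases h : i = j
  · subst h
    rw [if_pos rfl, ← card_cube d]
    exact Finset.sum_congr rfl fun x _ => eps_sq (x i)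
  · rw [if_neg h]
    apply flip_sum i
    intro x
    simp only [eps_update, if_pos rfl, if_true, if_neg (fun h' : j = i => h h'.symm)]
    ring

lemma sum_eps_four {d : ℕ} (a b i j : Fin d) (hab : a ≠ b) :
    ∑ x : Fin d → Bool, myeps (x a) * myeps (x b) * (myeps (x i) * myeps (x j)) =
    if (i = a ∧ j = b) ∨ (i = b ∧ j = a) then (2:ℝ)^d else 0 := by
  by_cases h : (i = a ∧ j = b) ∨ (i = b ∧ j = a)
  · rw [if_pos h, ← card_cube d]
    apply Finset.sum_congr rfl
    intro x _
    rcases h with ⟨hi, hj⟩ | ⟨hi, hj⟩ <;> rw [hi, hj] <;>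
      nlinarith [eps_sq (x a), eps_sq (x b)]
  · rw [if_neg h]
    by_cases h0 : (i = a ↔ j = a)
    · apply flip_sum a
      intro x
      by_cases hia : i = a
      · have hja : j = a := h0.mp hia
        rw [hia, hja]
        simp only [eps_update, if_pos rfl, if_true, if_neg (fun h' : b = a => hab h'.symm)]
        ring
      · have hja : ¬ j = a := fun h' => hia (h0.mpr h')
        simp only [eps_update, if_pos rfl, if_true, if_neg hia, if_neg hja,
          if_neg (fun h' : b = a => hab h'.symm)]
        ring
    · by_cases h1 : (i = b ↔ j = b)
      · apply flip_sum b
        intro x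
        by_cases hib : i = b
        · have hjb : j = b := h1.mp hib
          rw [hib, hjb]
          simp only [eps_update, if_pos rfl, if_true, if_neg hab]
          ring
        · have hjb : ¬ j = b := fun h' => hib (h1.mpr h')
          simp only [eps_update, if_pos rfl, if_true, if_neg hib, if_neg hjb, if_neg hab]
          ring
      · exfalso
        by_cases hia : i = a
        · have hja : ¬ j = a := fun h' => h0 ⟨fun _ => h', fun _ => hia⟩
          have hib : ¬ i = b := fun h' => hab (hia ▸ h' ▸ rfl : a = b)
          have hjb : j = b := by tauto
          exact h (Or.inl ⟨hia, hjb⟩)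
        · have hja : j = a := by tauto
          have hjb : ¬ j = b := fun h' => hab (hja ▸ h' ▸ rfl : a = b)
          have hib : i = b := by tauto
          exact h (Or.inr ⟨hib, hja⟩)
lemma sum_S_sq {d : ℕ} (w : Fin d → ℝ) :
    ∑ x : Fin d → Bool, (∑ i, w i * myeps (x i))^2 = 2^d * ∑ i, w i^2 := by
  have hx : ∀ x : Fin d → Bool, (∑ i, w i * myeps (x i))^2
      = ∑ i, ∑ j, w i * w j * (myeps (x i) * myeps (x j)) := by
    intro x
    rw [sq, Finset.sum_mul_sum]
    exact Finset.sum_congr rfl fun i _ => Finset.sum_congr rfl fun j _ => by ring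
  calc ∑ x : Fin d → Bool, (∑ i, w i * myeps (x i))^2
      = ∑ i, ∑ j, ∑ x : Fin d → Bool, w i * w j * (myeps (x i) * myeps (x j)) := by
        simp only [hx]
        rw [Finset.sum_comm]
        exact Finset.sum_congr rfl fun i _ => Finset.sum_comm
    _ = ∑ i, ∑ j, w i * w j * (if i = j then (2:ℝ)^d else 0) := by
        refine Finset.sum_congr rfl fun i _ => Finset.sum_congr rfl fun j _ => ?_
        rw [← Finset.mul_sum, sum_eps_two]
    _ = 2^d * ∑ i, w i^2 := by
        simp only [mul_ite, mul_zero, Finset.sum_ite_eq, Finset.mem_univ, if_true]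
        rw [Finset.mul_sum]
        exact Finset.sum_congr rfl fun i _ => by ring

lemma sum_Z {d : ℕ} (a b : Fin d) (hab : a ≠ b) (w : Fin d → ℝ) :
    ∑ x : Fin d → Bool, myeps (x a) * myeps (x b) * (∑ i, w i * myeps (x i))^2
    = 2^d * (2 * w a * w b) := by
  have hx : ∀ x : Fin d → Bool, myeps (x a) * myeps (x b) * (∑ i, w i * myeps (x i))^2
      = ∑ i, ∑ j, w i * w j * (myeps (x a) * myeps (x b) * (myeps (x i) * myeps (x j))) := by
    intro x
    rw [sq, Finset.sum_mul_sum, Finset.mul_sum]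
    refine Finset.sum_congr rfl fun i _ => ?_
    rw [Finset.mul_sum]
    exact Finset.sum_congr rfl fun j _ => by ring
  calc ∑ x : Fin d → Bool, myeps (x a) * myeps (x b) * (∑ i, w i * myeps (x i))^2
      = ∑ i, ∑ j, ∑ x : Fin d → Bool,
          w i * w j * (myeps (x a) * myeps (x b) * (myeps (x i) * myeps (x j))) := by
        simp only [hx]
        rw [Finset.sum_comm]
        exact Finset.sum_congr rfl fun i _ => Finset.sum_comm
    _ = ∑ i, ∑ j, w i * w j *
          (if (i = a ∧ j = b) ∨ (i = b ∧ j = a) then (2:ℝ)^d else 0) := by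
        refine Finset.sum_congr rfl fun i _ => Finset.sum_congr rfl fun j _ => ?_
        rw [← Finset.mul_sum, sum_eps_four a b i j hab]
    _ = ∑ i, ∑ j, ((if i = a ∧ j = b then w i * w j * (2:ℝ)^d else 0)
          + (if i = b ∧ j = a then w i * w j * (2:ℝ)^d else 0)) := by
        refine Finset.sum_congr rfl fun i _ => Finset.sum_congr rfl fun j _ => ?_
        by_cases h1 : i = a ∧ j = b <;> by_cases h2 : i = b ∧ j = a
        · exact absurd (h1.1.symm.trans h2.1) hab
        · rw [if_pos (Or.inl h1), if_pos h1, if_neg h2, add_zero]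
        · rw [if_pos (Or.inr h2), if_neg h1, if_pos h2, zero_add]
        · rw [if_neg (by tauto), if_neg h1, if_neg h2, add_zero, mul_zero]
    _ = 2^d * (2 * w a * w b) := by
        simp only [Finset.sum_add_distrib, ite_and]
        simp [Finset.sum_ite_eq, Finset.sum_ite_eq']
        ring


/-- For `x` uniform on `{-1,1}^d`, `d ≥ 2`, `y = x₁x₂`,
`Z = y (xᵀw)²`, with `‖w‖₂ = 1` and `w₁² + w₂² ≤ 1/2`, we have `Var(Z) ≥ 3/4`.
Expectations over the uniform distribution on the hypercube are encoded as
averages over sign patterns `x : Fin d → Bool`;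
`Var(Z) = E[Z²] − (E[Z])²`. -/
theorem variance_lower_bound (d : ℕ) (hd : 2 ≤ d) (w : Fin d → ℝ)
    (hw : ∑ i, w i ^ 2 = 1)
    (h12 : w ⟨0, by omega⟩ ^ 2 + w ⟨1, by omega⟩ ^ 2 ≤ 1 / 2) :
    (3 : ℝ) / 4 ≤
      (∑ x : Fin d → Bool,
          ((if x ⟨0, by omega⟩ then (1 : ℝ) else -1) *
            (if x ⟨1, by omega⟩ then (1 : ℝ) else -1) *
            (∑ i, w i * (if x i then (1 : ℝ) else -1)) ^ 2) ^ 2) / 2 ^ d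
      - ((∑ x : Fin d → Bool,
          ((if x ⟨0, by omega⟩ then (1 : ℝ) else -1) *
            (if x ⟨1, by omega⟩ then (1 : ℝ) else -1) *
            (∑ i, w i * (if x i then (1 : ℝ) else -1)) ^ 2)) / 2 ^ d) ^ 2 := by
  have hd0 : 0 < d := by omega
  have hd1 : 1 < d := by omega
  set a : Fin d := ⟨0, hd0⟩ with ha
  set b : Fin d := ⟨1, hd1⟩ with hb
  have hab : a ≠ b := by
    intro h
    have := congrArg Fin.val h
    simp [ha, hb] at this
  simp only [show ∀ c : Bool, (if c then (1:ℝ) else -1) = myeps c from fun c => rfl]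
  have h12' : w a ^ 2 + w b ^ 2 ≤ 1 / 2 := h12
  have key1 : ∑ x : Fin d → Bool,
      myeps (x a) * myeps (x b) * (∑ i, w i * myeps (x i)) ^ 2
      = 2 ^ d * (2 * w a * w b) := sum_Z a b hab w
  have key2 : (2:ℝ) ^ d ≤ ∑ x : Fin d → Bool,
      (myeps (x a) * myeps (x b) * (∑ i, w i * myeps (x i)) ^ 2) ^ 2 := by
    have hsq : ∑ x : Fin d → Bool,
        (myeps (x a) * myeps (x b) * (∑ i, w i * myeps (x i)) ^ 2) ^ 2
        = ∑ x : Fin d → Bool, ((∑ i, w i * myeps (x i)) ^ 2) ^ 2 := by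
      refine Finset.sum_congr rfl fun x _ => ?_
      have h1 := eps_sq (x a)
      have h2 := eps_sq (x b)
      calc (myeps (x a) * myeps (x b) * (∑ i, w i * myeps (x i)) ^ 2) ^ 2
          = (myeps (x a) * myeps (x a)) * (myeps (x b) * myeps (x b)) *
            ((∑ i, w i * myeps (x i)) ^ 2) ^ 2 := by ring
        _ = ((∑ i, w i * myeps (x i)) ^ 2) ^ 2 := by rw [h1, h2]; ring
    rw [hsq]
    have cauchy := sq_sum_le_card_mul_sum_sq
      (s := (Finset.univ : Finset (Fin d → Bool)))
      (f := fun x => (∑ i, w i * myeps (x i)) ^ 2)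
    have hcard : ((Finset.univ : Finset (Fin d → Bool)).card : ℝ) = 2 ^ d := by
      simp [Finset.card_univ]
    have hS2 : ∑ x : Fin d → Bool, (∑ i, w i * myeps (x i)) ^ 2 = 2 ^ d := by
      rw [sum_S_sq, hw, mul_one]
    rw [hcard, hS2] at cauchy
    have hN : (0:ℝ) < 2 ^ d := by positivity
    nlinarith [cauchy]
  rw [key1]
  have hN : (0:ℝ) < 2 ^ d := by positivity
  have hA : (2:ℝ) ^ d * (2 * w a * w b) / 2 ^ d = 2 * w a * w b := by
    field_simp
  rw [hA]
  have h3 : (2 * w a * w b) ^ 2 ≤ 1 / 4 := by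
    nlinarith [sq_nonneg (w a ^ 2 - w b ^ 2), sq_nonneg (w a ^ 2 + w b ^ 2),
      sq_nonneg (w a), sq_nonneg (w b)]
  have h4 : (1:ℝ) ≤ (∑ x : Fin d → Bool,
      (myeps (x a) * myeps (x b) * (∑ i, w i * myeps (x i)) ^ 2) ^ 2) / 2 ^ d :=
    (one_le_div hN).mpr key2
  linarith
end

section
/- Let X be a real random variable with E[X] = 0, E[X²] = σ² > 0, and E[X⁴] ≤ K·σ⁴ for some K ≥ 1. Then with θ = 1/(2^{5/2}·√K), P(X ≥ θσ) ≥ θ². -/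
open MeasureTheory

lemma my_cauchy_schwarz {Ω : Type*} [MeasurableSpace Ω] (μ : Measure Ω)
    {f g : Ω → ℝ} (hfm : AEStronglyMeasurable f μ) (hgm : AEStronglyMeasurable g μ)
    (hfpos : ∀ ω, 0 ≤ f ω) (hgpos : ∀ ω, 0 ≤ g ω)
    (hf2 : Integrable (fun ω => f ω ^ 2) μ) (hg2 : Integrable (fun ω => g ω ^ 2) μ) :
    ∫ ω, f ω * g ω ∂μ ≤ Real.sqrt (∫ ω, f ω ^ 2 ∂μ) * Real.sqrt (∫ ω, g ω ^ 2 ∂μ) := by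
  have hpq : Real.HolderConjugate 2 2 := by constructor <;> norm_num
  have hf : MemLp f (ENNReal.ofReal 2) μ := by
    rw [show ENNReal.ofReal 2 = 2 by norm_num]
    exact (memLp_two_iff_integrable_sq hfm).2 hf2
  have hg : MemLp g (ENNReal.ofReal 2) μ := by
    rw [show ENNReal.ofReal 2 = 2 by norm_num]
    exact (memLp_two_iff_integrable_sq hgm).2 hg2
  have h := integral_mul_le_Lp_mul_Lq_of_nonneg hpq (ae_of_all μ hfpos) (ae_of_all μ hgpos) hf hg
  calc ∫ ω, f ω * g ω ∂μ
      ≤ (∫ a, f a ^ (2:ℝ) ∂μ) ^ (1/(2:ℝ)) * (∫ a, g a ^ (2:ℝ) ∂μ) ^ (1/(2:ℝ)) := h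
    _ = Real.sqrt (∫ ω, f ω ^ 2 ∂μ) * Real.sqrt (∫ ω, g ω ^ 2 ∂μ) := by
        rw [← Real.sqrt_eq_rpow, ← Real.sqrt_eq_rpow]
        norm_num [Real.rpow_natCast]

set_option maxHeartbeats 1000000 in
/-- If `E[X] = 0`, `E[X²] = σ² > 0`, `E[X⁴] ≤ K σ⁴` with `K ≥ 1`,
then with `θ = 1/(2^{5/2} √K)` we have `P(X ≥ θσ) ≥ θ²`. -/
theorem one_sided_deviation {Ω : Type*} [MeasurableSpace Ω]
    (μ : Measure Ω) [IsProbabilityMeasure μ]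
    (X : Ω → ℝ) (hXm : Measurable X)
    (h1 : Integrable X μ)
    (h2 : Integrable (fun ω => X ω ^ 2) μ)
    (h4 : Integrable (fun ω => X ω ^ 4) μ)
    (σ K : ℝ) (hσ : 0 < σ) (hK : 1 ≤ K)
    (hmean : ∫ ω, X ω ∂μ = 0)
    (hvar : ∫ ω, X ω ^ 2 ∂μ = σ ^ 2)
    (hmom : ∫ ω, X ω ^ 4 ∂μ ≤ K * σ ^ 4) :
    (1 / (2 ^ ((5 : ℝ) / 2) * Real.sqrt K)) ^ 2 ≤
      (μ {ω | (1 / (2 ^ ((5 : ℝ) / 2) * Real.sqrt K)) * σ ≤ X ω}).toReal := by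
  set c : ℝ := 2 ^ ((5 : ℝ) / 2) with hc
  set s : ℝ := Real.sqrt K with hs
  set θ : ℝ := 1 / (c * s) with hθ
  have hs1 : 1 ≤ s := by
    rw [hs, show (1:ℝ) = Real.sqrt 1 by simp]
    exact Real.sqrt_le_sqrt hK
  have hs0 : 0 < s := lt_of_lt_of_le one_pos hs1
  have hc32 : c = Real.sqrt 32 := by
    rw [hc, Real.sqrt_eq_rpow, show (32:ℝ) = 2 ^ (5:ℕ) by norm_num,
      ← Real.rpow_natCast 2 5, ← Real.rpow_mul (by norm_num)]
    norm_num
  have hc4 : (4:ℝ) ≤ c := by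
    rw [hc32]
    rw [show (4:ℝ) = Real.sqrt 16 by
      rw [show (16:ℝ) = 4^2 by norm_num, Real.sqrt_sq (by norm_num)]]
    exact Real.sqrt_le_sqrt (by norm_num)
  have hc0 : 0 < c := lt_of_lt_of_le (by norm_num) hc4
  have hθ0 : 0 < θ := by positivity
  -- quantities
  set A : ℝ := ∫ ω, |X ω| ∂μ with hA
  set B : ℝ := ∫ ω, |X ω| ^ 3 ∂μ with hB
  have habs : Integrable (fun ω => |X ω|) μ := h1.abs
  have hcube : Integrable (fun ω => |X ω| ^ 3) μ := by
    refine Integrable.mono' (h2.add h4) (hXm.abs.pow_const 3).aestronglyMeasurable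
      (ae_of_all μ fun ω => ?_)
    have ht0 : (0:ℝ) ≤ |X ω| := abs_nonneg _
    rw [Real.norm_of_nonneg (by positivity)]
    have h2' : X ω ^ 2 = |X ω| ^ 2 := (sq_abs _).symm
    have h4' : X ω ^ 4 = |X ω| ^ 4 := by
      rw [show (4:ℕ) = 2*2 by norm_num, pow_mul, pow_mul, sq_abs]
    simp only [Pi.add_apply]
    rw [h2', h4']
    nlinarith [sq_nonneg (|X ω| * (|X ω| - 1)), pow_nonneg ht0 3]
  have hA0 : 0 ≤ A := integral_nonneg fun ω => abs_nonneg _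
  have hB0 : 0 ≤ B := integral_nonneg fun ω => by positivity
  -- CS1 : σ² ≤ √A √B
  have hCS1 : σ ^ 2 ≤ Real.sqrt A * Real.sqrt B := by
    have h := my_cauchy_schwarz μ (f := fun ω => Real.sqrt |X ω|)
      (g := fun ω => |X ω| * Real.sqrt |X ω|)
      (hXm.abs.sqrt).aestronglyMeasurable
      (hXm.abs.mul hXm.abs.sqrt).aestronglyMeasurable
      (fun ω => Real.sqrt_nonneg _)
      (fun ω => mul_nonneg (abs_nonneg _) (Real.sqrt_nonneg _)) ?_ ?_
    · have e1 : ∀ ω : Ω, Real.sqrt |X ω| * (|X ω| * Real.sqrt |X ω|) = X ω ^ 2 := by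
        intro ω
        rw [show Real.sqrt |X ω| * (|X ω| * Real.sqrt |X ω|)
            = Real.sqrt |X ω| ^ 2 * |X ω| by ring, Real.sq_sqrt (abs_nonneg _), ← sq_abs]
        ring
      have e2 : ∀ ω : Ω, Real.sqrt |X ω| ^ 2 = |X ω| := fun ω => Real.sq_sqrt (abs_nonneg _)
      have e3 : ∀ ω : Ω, (|X ω| * Real.sqrt |X ω|) ^ 2 = |X ω| ^ 3 := by
        intro ω
        rw [mul_pow, Real.sq_sqrt (abs_nonneg _)]; ring
      simp only [e1, e2, e3] at h
      rwa [hvar] at h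
    · simpa only [Real.sq_sqrt (abs_nonneg _)] using habs
    · have : (fun ω => (|X ω| * Real.sqrt |X ω|) ^ 2) = fun ω => |X ω| ^ 3 := by
        funext ω; rw [mul_pow, Real.sq_sqrt (abs_nonneg _)]; ring
      rw [this]; exact hcube
  -- CS2 : B ≤ √K σ³
  have hCS2 : B ≤ s * σ ^ 3 := by
    have h := my_cauchy_schwarz μ (f := fun ω => |X ω|) (g := fun ω => X ω ^ 2)
      hXm.abs.aestronglyMeasurable (hXm.pow_const 2).aestronglyMeasurable
      (fun ω => abs_nonneg _) (fun ω => sq_nonneg _) (by simpa only [sq_abs] using h2) ?_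
    · have e1 : ∀ ω : Ω, |X ω| * X ω ^ 2 = |X ω| ^ 3 := by
        intro ω; rw [← sq_abs]; ring
      have e2 : ∀ ω : Ω, |X ω| ^ 2 = X ω ^ 2 := fun ω => sq_abs _
      have e3 : ∀ ω : Ω, (X ω ^ 2) ^ 2 = X ω ^ 4 := fun ω => by ring
      simp only [e1, e2, e3] at h
      rw [hvar] at h
      calc B ≤ Real.sqrt (σ ^ 2) * Real.sqrt (∫ ω, X ω ^ 4 ∂μ) := h
        _ ≤ Real.sqrt (σ ^ 2) * Real.sqrt (K * σ ^ 4) :=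
            mul_le_mul_of_nonneg_left (Real.sqrt_le_sqrt hmom) (Real.sqrt_nonneg _)
        _ = s * σ ^ 3 := by
            rw [Real.sqrt_sq hσ.le, Real.sqrt_mul (le_trans one_pos.le hK),
              show σ ^ 4 = (σ^2)^2 by ring, Real.sqrt_sq (by positivity), hs]
            ring
    · have : (fun ω => (X ω ^ 2) ^ 2) = fun ω => X ω ^ 4 := by funext ω; ring
      rw [this]; exact h4
  -- lower bound on A
  have hAlow : σ / s ≤ A := by
    have h1' : σ ^ 4 ≤ A * B := by
      have := Real.sq_sqrt (mul_nonneg hA0 hB0)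
      nlinarith [Real.sqrt_nonneg A, Real.sqrt_nonneg B, Real.sq_sqrt hA0, Real.sq_sqrt hB0,
        sq_nonneg σ]
    have h2' : σ ^ 4 ≤ A * (s * σ ^ 3) := le_trans h1' (by nlinarith)
    rw [div_le_iff₀ hs0]
    nlinarith [pow_pos hσ 3]
  -- positive part
  set P : Ω → ℝ := fun ω => max (X ω) 0 with hP
  have hPint : Integrable P μ := h1.pos_part
  have hP2int : Integrable (fun ω => P ω ^ 2) μ := by
    refine Integrable.mono' h2 ((hXm.max measurable_const).pow_const 2).aestronglyMeasurable
      (ae_of_all μ fun ω => ?_)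
    rw [Real.norm_of_nonneg (by positivity)]
    have hx : P ω ≤ |X ω| := max_le (le_abs_self _) (abs_nonneg _)
    calc P ω ^ 2 ≤ |X ω| ^ 2 := pow_le_pow_left₀ (le_max_right _ _) hx 2
      _ = X ω ^ 2 := sq_abs _
  have hNint : Integrable (fun ω => max (-X ω) 0) μ := h1.neg.pos_part
  have hEP : ∫ ω, P ω ∂μ = A / 2 := by
    have hsub : ∫ ω, (P ω - max (-X ω) 0) ∂μ = ∫ ω, P ω ∂μ - ∫ ω, max (-X ω) 0 ∂μ :=
      integral_sub hPint hNint
    have hadd : ∫ ω, (P ω + max (-X ω) 0) ∂μ = ∫ ω, P ω ∂μ + ∫ ω, max (-X ω) 0 ∂μ :=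
      integral_add hPint hNint
    have e1 : (fun ω => P ω - max (-X ω) 0) = X := by
      funext ω; simp only [hP]; rcases le_total (X ω) 0 with h | h
      · rw [max_eq_right h, max_eq_left (by linarith)]; ring
      · rw [max_eq_left h, max_eq_right (by linarith)]; ring
    have e2 : (fun ω => P ω + max (-X ω) 0) = fun ω => |X ω| := by
      funext ω; simp only [hP]; rcases le_total (X ω) 0 with h | h
      · rw [max_eq_right h, max_eq_left (by linarith), abs_of_nonpos h]; ring
      · rw [max_eq_left h, max_eq_right (by linarith), abs_of_nonneg h]; ring
    rw [e1, hmean] at hsub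
    rw [e2] at hadd
    rw [← hA] at hadd
    linarith
  -- the event
  set S : Set Ω := {ω | θ * σ ≤ X ω} with hSdef
  have hS : MeasurableSet S := measurableSet_le measurable_const hXm
  set p : ℝ := (μ S).toReal with hp
  have hp0 : 0 ≤ p := ENNReal.toReal_nonneg
  -- split the integral
  have hsplit : ∫ ω in S, P ω ∂μ + ∫ ω in Sᶜ, P ω ∂μ = ∫ ω, P ω ∂μ :=
    integral_add_compl hS hPint
  have hbound1 : ∫ ω in Sᶜ, P ω ∂μ ≤ θ * σ := by
    have hmono : ∫ ω in Sᶜ, P ω ∂μ ≤ ∫ _ω in Sᶜ, θ * σ ∂μ := by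
      refine setIntegral_mono_on hPint.integrableOn (integrableOn_const (lt_top_iff_ne_top.1 ?_))
        hS.compl (fun ω hω => ?_)
      · exact measure_lt_top μ _
      · have hω' : ¬ (θ * σ ≤ X ω) := hω
        exact max_le (le_of_not_ge hω') (by positivity)
    refine le_trans hmono ?_
    rw [setIntegral_const, smul_eq_mul, measureReal_def]
    have h1le : (μ Sᶜ).toReal ≤ 1 := by
      rw [show (1:ℝ) = (μ Set.univ).toReal by simp]
      exact ENNReal.toReal_mono (by simp) (measure_mono (Set.subset_univ _))
    nlinarith [mul_pos hθ0 hσ]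
  have hbound2 : ∫ ω in S, P ω ∂μ ≤ σ * Real.sqrt p := by
    set g : Ω → ℝ := S.indicator (fun _ => 1) with hg
    have hgm : Measurable g := measurable_const.indicator hS
    have hgsq : (fun ω => g ω ^ 2) = g := by
      funext ω; by_cases h : ω ∈ S <;> simp [hg, h]
    have hgint : Integrable g μ := (integrable_const 1).indicator hS
    have hintg : ∫ ω, g ω ∂μ = p := by
      rw [hg, integral_indicator_const (1:ℝ) hS]; simp [hp, measureReal_def]
    have h := my_cauchy_schwarz μ (f := P) (g := g)
      (hXm.max measurable_const).aestronglyMeasurable hgm.aestronglyMeasurable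
      (fun ω => le_max_right _ _)
      (fun ω => by by_cases h : ω ∈ S <;> simp [hg, h])
      hP2int (by rw [hgsq]; exact hgint)
    have e1 : ∫ ω, P ω * g ω ∂μ = ∫ ω in S, P ω ∂μ := by
      rw [← integral_indicator hS]
      congr 1; funext ω; by_cases h : ω ∈ S <;> simp [hg, h]
    rw [e1, hgsq, hintg] at h
    refine le_trans h ?_
    have hPX : ∫ ω, P ω ^ 2 ∂μ ≤ σ ^ 2 := by
      rw [← hvar]
      refine integral_mono hP2int h2 (fun ω => ?_)
      have hx : P ω ≤ |X ω| := max_le (le_abs_self _) (abs_nonneg _)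
      calc P ω ^ 2 ≤ |X ω| ^ 2 := pow_le_pow_left₀ (le_max_right _ _) hx 2
        _ = X ω ^ 2 := sq_abs _
    gcongr
    calc Real.sqrt (∫ ω, P ω ^ 2 ∂μ) ≤ Real.sqrt (σ ^ 2) := Real.sqrt_le_sqrt hPX
      _ = σ := Real.sqrt_sq hσ.le
  -- combine
  have hq0 : 0 ≤ Real.sqrt p := Real.sqrt_nonneg _
  set q : ℝ := Real.sqrt p with hq
  have hABC : σ / s ≤ 2 * (θ * σ) + 2 * (σ * q) := by
    linarith [hAlow, hEP, hsplit, hbound1, hbound2]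
  have hθcs : θ * (c * s) = 1 := by
    rw [hθ]; field_simp
  have hf : c * s * (σ / s) ≤ c * s * (2 * (θ * σ) + 2 * (σ * q)) :=
    mul_le_mul_of_nonneg_left hABC (mul_pos hc0 hs0).le
  have hl : c * s * (σ / s) = c * σ := by field_simp
  have hr : c * s * (2 * (θ * σ) + 2 * (σ * q)) = 2 * σ + 2 * σ * (c * s * q) := by
    calc c * s * (2 * (θ * σ) + 2 * (σ * q))
        = 2 * σ * (θ * (c * s)) + 2 * σ * (c * s * q) := by ring
      _ = 2 * σ + 2 * σ * (c * s * q) := by rw [hθcs]; ring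
  rw [hl, hr] at hf
  have hcsq : (1:ℝ) ≤ c * s * q := by nlinarith [hσ, hc4]
  have hθq : θ ≤ q := by
    have h' : θ * (c * s) ≤ q * (c * s) := by
      rw [hθcs]; nlinarith
    exact le_of_mul_le_mul_right h' (mul_pos hc0 hs0)
  have hfin : θ ^ 2 ≤ q ^ 2 := pow_le_pow_left₀ hθ0.le hθq 2
  rw [hq, Real.sq_sqrt hp0] at hfin
  exact hfin
end

section
/- Let M̂ ∈ ℝ^{d×d} be symmetric with operator norm ‖M̂‖₂, w a unit vector, q = wᵀM̂w, s = wᵀM̂²w, r = wᵀM̂³w. Then |r − qs| ≤ 2‖M̂‖₂·(s − q²). -/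
open Matrix

open RealInnerProductSpace

/-- For a symmetric matrix `M̂` with spectral norm `‖M̂‖₂`
(the operator norm of the induced map on Euclidean space) and a unit vector `w`,
with `q = wᵀM̂w`, `s = wᵀM̂²w`, `r = wᵀM̂³w`, we have
`|r − qs| ≤ 2‖M̂‖₂ (s − q²)`. -/

theorem r_sub_qs_bound (d : ℕ) (M : Matrix (Fin d) (Fin d) ℝ)
    (hM : M.IsSymm) (w : Fin d → ℝ) (hw : ∑ i, w i ^ 2 = 1) :
    |w ⬝ᵥ ((M * M * M) *ᵥ w) - (w ⬝ᵥ (M *ᵥ w)) * (w ⬝ᵥ ((M * M) *ᵥ w))|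
      ≤ 2 * ‖Matrix.toEuclideanCLM (𝕜 := ℝ) M‖ *
        (w ⬝ᵥ ((M * M) *ᵥ w) - (w ⬝ᵥ (M *ᵥ w)) ^ 2) := by
  classical
  have hA : M.IsHermitian := by
    rw [Matrix.IsHermitian, Matrix.conjTranspose_eq_transpose_of_trivial]; exact hM
  set T := Matrix.toEuclideanCLM (𝕜 := ℝ) M with hT
  set N := ‖T‖ with hN
  set u := hA.eigenvectorBasis with hu
  set μ := hA.eigenvalues with hμ
  set w' : EuclideanSpace ℝ (Fin d) := (WithLp.equiv 2 (Fin d → ℝ)).symm w with hw'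
  -- dot products are inner products
  have hquad : ∀ v : Fin d → ℝ, w ⬝ᵥ v = ⟪w', (WithLp.equiv 2 (Fin d → ℝ)).symm v⟫ := by
    intro v
    rw [hw', WithLp.equiv_symm_apply, EuclideanSpace.inner_toLp_toLp]
    simp [dotProduct_comm]
  -- mulVec corresponds to T
  have hmv : ∀ v : Fin d → ℝ,
      (WithLp.equiv 2 (Fin d → ℝ)).symm (M *ᵥ v) = T ((WithLp.equiv 2 (Fin d → ℝ)).symm v) := by
    intro v
    rw [hT, WithLp.equiv_symm_apply, Matrix.toEuclideanCLM_toLp]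
  -- T is symmetric
  have hsym : ∀ x y : EuclideanSpace ℝ (Fin d), ⟪T x, y⟫ = ⟪x, T y⟫ := by
    have h := (Matrix.isHermitian_iff_isSymmetric (A := M)).mp hA
    intro x y
    have := h x y
    rwa [← Matrix.coe_toEuclideanCLM_eq_toEuclideanLin] at this
  -- eigen equation for T
  have hTu : ∀ j, T (u j) = μ j • u j := by
    intro j
    apply (WithLp.equiv 2 (Fin d → ℝ)).injective
    have h1 := hA.mulVec_eigenvectorBasis j
    rw [WithLp.equiv_apply, WithLp.equiv_apply, Matrix.ofLp_toEuclideanCLM]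
    simpa using h1
  have hadj : ∀ (j) (x : EuclideanSpace ℝ (Fin d)), ⟪u j, T x⟫ = μ j * ⟪u j, x⟫ := by
    intro j x
    rw [← hsym, hTu j, inner_smul_left]
    simp
  set b : Fin d → ℝ := fun j => ⟪u j, w'⟫ with hb
  set α : Fin d → ℝ := fun j => b j ^ 2 with hα
  -- expansions
  have expand : ∀ y : EuclideanSpace ℝ (Fin d), ⟪w', y⟫ = ∑ j, b j * ⟪u j, y⟫ := by
    intro y
    rw [← u.sum_inner_mul_inner w' y]
    refine Finset.sum_congr rfl fun j _ => ?_
    have hcomm : (inner ℝ w' (u j) : ℝ) = b j := real_inner_comm _ _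
    rw [hcomm]
  have hαsum : ∑ j, α j = 1 := by
    have h0 : w ⬝ᵥ w = 1 := by
      rw [dotProduct]
      simpa [sq] using hw
    calc ∑ j, α j = ∑ j, b j * ⟪u j, w'⟫ := by
          refine Finset.sum_congr rfl fun j _ => ?_
          simp only [hα, hb, sq]
      _ = ⟪w', w'⟫ := (expand w').symm
      _ = w ⬝ᵥ w := (hquad w).symm
      _ = 1 := h0
  have hq : w ⬝ᵥ (M *ᵥ w) = ∑ j, α j * μ j := by
    rw [hquad, hmv, ← hw', expand]
    refine Finset.sum_congr rfl fun j _ => ?_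
    rw [hadj]; simp only [hα, hb]; ring
  have hs : w ⬝ᵥ ((M * M) *ᵥ w) = ∑ j, α j * μ j ^ 2 := by
    rw [← Matrix.mulVec_mulVec, hquad, hmv, hmv, ← hw', expand]
    refine Finset.sum_congr rfl fun j _ => ?_
    rw [hadj, hadj]; simp only [hα, hb]; ring
  have hr : w ⬝ᵥ ((M * M * M) *ᵥ w) = ∑ j, α j * μ j ^ 3 := by
    rw [← Matrix.mulVec_mulVec, ← Matrix.mulVec_mulVec, hquad, hmv, hmv, hmv, ← hw', expand]
    refine Finset.sum_congr rfl fun j _ => ?_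
    rw [hadj, hadj, hadj]; simp only [hα, hb]; ring
  -- bounds
  have hα0 : ∀ j, 0 ≤ α j := fun j => sq_nonneg _
  have hμN : ∀ j, |μ j| ≤ N := by
    intro j
    have hnorm : ‖u j‖ = 1 := u.orthonormal.1 j
    have h1 : ‖T (u j)‖ ≤ N := by
      calc ‖T (u j)‖ ≤ N * ‖u j‖ := T.le_opNorm _
        _ = N := by rw [hnorm, mul_one]
    rwa [hTu j, norm_smul, hnorm, mul_one, Real.norm_eq_abs] at h1
  set q : ℝ := ∑ j, α j * μ j with hqdef
  have hqN : |q| ≤ N := by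
    calc |q| ≤ ∑ j, |α j * μ j| := Finset.abs_sum_le_sum_abs _ _
      _ ≤ ∑ j, α j * N := by
          refine Finset.sum_le_sum fun j _ => ?_
          rw [abs_mul, abs_of_nonneg (hα0 j)]
          exact mul_le_mul_of_nonneg_left (hμN j) (hα0 j)
      _ = N := by rw [← Finset.sum_mul, hαsum, one_mul]
  rw [hq, hr, hs]
  -- algebraic identities
  have e1 : (∑ j, α j * μ j ^ 3) - q * (∑ j, α j * μ j ^ 2)
      = ∑ j, α j * ((μ j - q) ^ 2 * (μ j + q)) := by
    have h : ∀ j ∈ Finset.univ, α j * ((μ j - q) ^ 2 * (μ j + q))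
        = α j * μ j ^ 3 - (α j * μ j ^ 2) * q - (α j * μ j) * q ^ 2 + α j * q ^ 3 :=
      fun j _ => by ring
    rw [Finset.sum_congr rfl h, Finset.sum_add_distrib, Finset.sum_sub_distrib,
      Finset.sum_sub_distrib, ← Finset.sum_mul, ← Finset.sum_mul, ← Finset.sum_mul, ← hqdef,
      hαsum]
    ring
  have e2 : (∑ j, α j * μ j ^ 2) - q ^ 2 = ∑ j, α j * (μ j - q) ^ 2 := by
    have h : ∀ j ∈ Finset.univ, α j * (μ j - q) ^ 2
        = α j * μ j ^ 2 - (α j * μ j) * (2 * q) + α j * q ^ 2 := fun j _ => by ring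
    rw [Finset.sum_congr rfl h, Finset.sum_add_distrib, Finset.sum_sub_distrib,
      ← Finset.sum_mul, ← Finset.sum_mul, ← hqdef, hαsum]
    ring
  rw [e1, e2]
  calc |∑ j, α j * ((μ j - q) ^ 2 * (μ j + q))|
      ≤ ∑ j, |α j * ((μ j - q) ^ 2 * (μ j + q))| := Finset.abs_sum_le_sum_abs _ _
    _ ≤ ∑ j, (2 * N) * (α j * (μ j - q) ^ 2) := by
        refine Finset.sum_le_sum fun j _ => ?_
        rw [abs_mul, abs_mul, abs_of_nonneg (hα0 j), abs_of_nonneg (sq_nonneg _)]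
        have h1 : |μ j + q| ≤ 2 * N := by
          calc |μ j + q| ≤ |μ j| + |q| := abs_add_le _ _
            _ ≤ N + N := add_le_add (hμN j) hqN
            _ = 2 * N := by ring
        calc α j * ((μ j - q) ^ 2 * |μ j + q|)
            ≤ α j * ((μ j - q) ^ 2 * (2 * N)) := by
              exact mul_le_mul_of_nonneg_left
                (mul_le_mul_of_nonneg_left h1 (sq_nonneg _)) (hα0 j)
          _ = (2 * N) * (α j * (μ j - q) ^ 2) := by ring
    _ = 2 * N * ∑ j, α j * (μ j - q) ^ 2 := by rw [← Finset.mul_sum]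
end

section
/- Let M̂ be symmetric, w a unit vector, a ∈ ℝ, α > 0 with α|a|·‖M̂‖₂ ≤ 1/2. Let w̃ = (I + αaM̂)w, w⁺ = w̃/‖w̃‖₂, q = wᵀM̂w, q⁺ = (w⁺)ᵀM̂w⁺. Then if a ≥ 0 we have q⁺ ≥ q, and if a ≤ 0 we have q⁺ ≤ q. -/
open Matrix
set_option maxHeartbeats 1000000

lemma mulVec_sq_le (d : ℕ) (M : Matrix (Fin d) (Fin d) ℝ) (x : Fin d → ℝ) :
    (M *ᵥ x) ⬝ᵥ (M *ᵥ x) ≤ ‖Matrix.toEuclideanCLM (𝕜 := ℝ) M‖ ^ 2 * (x ⬝ᵥ x) := by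
  set N := ‖Matrix.toEuclideanCLM (𝕜 := ℝ) M‖ with hN
  set X : EuclideanSpace ℝ (Fin d) := (WithLp.equiv 2 (Fin d → ℝ)).symm x with hX
  have h1 : ‖Matrix.toEuclideanCLM (𝕜 := ℝ) M X‖ ≤ N * ‖X‖ :=
    (Matrix.toEuclideanCLM (𝕜 := ℝ) M).le_opNorm X
  have h2 : Matrix.toEuclideanCLM (𝕜 := ℝ) M X = (WithLp.equiv 2 (Fin d → ℝ)).symm (M *ᵥ x) :=
    Matrix.toEuclideanCLM_toLp M x
  have hnorm : ∀ y : Fin d → ℝ,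
      ‖(WithLp.equiv 2 (Fin d → ℝ)).symm y‖ ^ 2 = y ⬝ᵥ y := by
    intro y
    rw [EuclideanSpace.norm_eq, Real.sq_sqrt (by positivity)]
    simp [dotProduct, Real.norm_eq_abs, sq_abs, sq]
  have h3 : ‖Matrix.toEuclideanCLM (𝕜 := ℝ) M X‖ ^ 2 ≤ N ^ 2 * ‖X‖ ^ 2 := by
    nlinarith [norm_nonneg (Matrix.toEuclideanCLM (𝕜 := ℝ) M X), norm_nonneg X,
      norm_nonneg (Matrix.toEuclideanCLM (𝕜 := ℝ) M)]
  rw [h2, hnorm] at h3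
  rw [hX, hnorm] at h3
  exact h3

/-- One step of normalized power iteration. For symmetric `M̂`,
unit vector `w`, `a ∈ ℝ`, `α > 0` with `α|a|‖M̂‖₂ ≤ 1/2`, let
`w̃ = (I + αaM̂)w`, `w⁺ = w̃/‖w̃‖₂`, `q = wᵀM̂w`, `q⁺ = (w⁺)ᵀM̂w⁺`.
Then `a ≥ 0 → q⁺ ≥ q` and `a ≤ 0 → q⁺ ≤ q`. -/
theorem q_monotone (d : ℕ) (M : Matrix (Fin d) (Fin d) ℝ) (hM : M.IsSymm)
    (w : Fin d → ℝ) (hw : ∑ i, w i ^ 2 = 1) (a α : ℝ) (hα : 0 < α)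
    (hstab : α * |a| * ‖Matrix.toEuclideanCLM (𝕜 := ℝ) M‖ ≤ 1 / 2)
    (wt : Fin d → ℝ) (hwt : wt = ((1 : Matrix (Fin d) (Fin d) ℝ) + (α * a) • M) *ᵥ w)
    (wp : Fin d → ℝ) (hwp : wp = (Real.sqrt (∑ i, wt i ^ 2))⁻¹ • wt) :
    (0 ≤ a → w ⬝ᵥ (M *ᵥ w) ≤ wp ⬝ᵥ (M *ᵥ wp)) ∧
    (a ≤ 0 → wp ⬝ᵥ (M *ᵥ wp) ≤ w ⬝ᵥ (M *ᵥ w)) := by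
  set N := ‖Matrix.toEuclideanCLM (𝕜 := ℝ) M‖ with hNdef
  have hN : 0 ≤ N := norm_nonneg _
  set b := α * a with hb
  set u := M *ᵥ w with hu
  set q := w ⬝ᵥ u with hq
  set s := u ⬝ᵥ u with hs
  set r := u ⬝ᵥ (M *ᵥ u) with hr
  have hsym : ∀ x y : Fin d → ℝ, x ⬝ᵥ (M *ᵥ y) = (M *ᵥ x) ⬝ᵥ y := by
    intro x y
    rw [Matrix.dotProduct_mulVec, ← Matrix.mulVec_transpose, hM.eq]
  have hww : w ⬝ᵥ w = 1 := by
    rw [← hw]; simp [dotProduct, sq]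
  have hwt' : wt = w + b • u := by
    rw [hwt, Matrix.add_mulVec, Matrix.one_mulVec, Matrix.smul_mulVec, hu]
  have hCS : ∀ x y : Fin d → ℝ, (x ⬝ᵥ y) ^ 2 ≤ (x ⬝ᵥ x) * (y ⬝ᵥ y) := by
    intro x y
    have := Finset.sum_mul_sq_le_sq_mul_sq Finset.univ x y
    simpa [dotProduct, sq, mul_pow] using this
  have hsq : q ^ 2 ≤ s := by
    have := hCS w u
    rwa [hww, one_mul, ← hq, ← hs] at this
  have hsN : s ≤ N ^ 2 := by
    have := mulVec_sq_le d M w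
    rwa [← hu, ← hNdef, ← hs, hww, mul_one] at this
  have hqN : |q| ≤ N := by
    have h1 : q ^ 2 ≤ N ^ 2 := hsq.trans hsN
    nlinarith [abs_nonneg q, sq_abs q]
  set v := u - q • w with hv
  have hvv : v ⬝ᵥ v = s - q ^ 2 := by
    rw [hv]
    simp only [sub_dotProduct, dotProduct_sub, smul_dotProduct,
      dotProduct_smul, smul_eq_mul]
    rw [dotProduct_comm u w, hww, ← hq, ← hs]
    ring
  have hvMv : v ⬝ᵥ (M *ᵥ v) = r - 2 * q * s + q ^ 3 := by
    rw [hv, Matrix.mulVec_sub, Matrix.mulVec_smul, ← hu]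
    simp only [sub_dotProduct, dotProduct_sub, smul_dotProduct,
      dotProduct_smul, smul_eq_mul]
    rw [hsym w u, ← hr, ← hs, ← hq]
    ring
  have hkey : r - q * s = v ⬝ᵥ (M *ᵥ v) + q * (v ⬝ᵥ v) := by
    rw [hvMv, hvv]; ring
  have hvv0 : 0 ≤ v ⬝ᵥ v := by
    rw [hvv]; nlinarith
  have hvMv_bound : |v ⬝ᵥ (M *ᵥ v)| ≤ N * (v ⬝ᵥ v) := by
    have h1 : (v ⬝ᵥ (M *ᵥ v)) ^ 2 ≤ (v ⬝ᵥ v) * ((M *ᵥ v) ⬝ᵥ (M *ᵥ v)) := hCS v (M *ᵥ v)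
    have h2 := mulVec_sq_le d M v
    rw [← hNdef] at h2
    have h4 : 0 ≤ N * (v ⬝ᵥ v) := mul_nonneg hN hvv0
    nlinarith [abs_nonneg (v ⬝ᵥ (M *ᵥ v)), sq_abs (v ⬝ᵥ (M *ᵥ v))]
  have hrqs : |r - q * s| ≤ 2 * N * (s - q ^ 2) := by
    rw [hkey]
    calc |v ⬝ᵥ (M *ᵥ v) + q * (v ⬝ᵥ v)| ≤ |v ⬝ᵥ (M *ᵥ v)| + |q * (v ⬝ᵥ v)| := abs_add_le _ _
      _ ≤ N * (v ⬝ᵥ v) + N * (v ⬝ᵥ v) := by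
          refine add_le_add hvMv_bound ?_
          rw [abs_mul, abs_of_nonneg hvv0]
          exact mul_le_mul_of_nonneg_right hqN hvv0
      _ = 2 * N * (s - q ^ 2) := by rw [hvv]; ring
  have hbN : |b| * N ≤ 1 / 2 := by
    rw [hb, abs_mul, abs_of_pos hα]
    exact hstab
  have hbq : |b * q| ≤ 1 / 2 := by
    rw [abs_mul]
    calc |b| * |q| ≤ |b| * N := mul_le_mul_of_nonneg_left hqN (abs_nonneg b)
      _ ≤ 1 / 2 := hbN
  have hD : wt ⬝ᵥ wt = 1 + 2 * b * q + b ^ 2 * s := by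
    rw [hwt']
    simp only [add_dotProduct, dotProduct_add, smul_dotProduct,
      dotProduct_smul, smul_eq_mul]
    rw [hww, ← hq, ← hs, dotProduct_comm u w, ← hq]
    ring
  set D := 1 + 2 * b * q + b ^ 2 * s with hDdef
  have hD4 : 1 / 4 ≤ D := by
    have h1 : -(1 / 2) ≤ b * q := neg_le_of_abs_le hbq
    have h2 : b ^ 2 * q ^ 2 ≤ b ^ 2 * s := mul_le_mul_of_nonneg_left hsq (sq_nonneg b)
    nlinarith [sq_nonneg (1 + b * q)]
  have hDpos : 0 < D := by linarith
  have hT : wt ⬝ᵥ (M *ᵥ wt) = q + 2 * b * s + b ^ 2 * r := by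
    rw [hwt', Matrix.mulVec_add, Matrix.mulVec_smul, ← hu]
    simp only [add_dotProduct, dotProduct_add, smul_dotProduct,
      dotProduct_smul, smul_eq_mul]
    rw [← hq, ← hr, hsym w u, ← hs]
    ring
  have hsum : ∑ i, wt i ^ 2 = D := by
    rw [← hD]; simp [dotProduct, sq]
  have hc : (Real.sqrt D)⁻¹ * (Real.sqrt D)⁻¹ = D⁻¹ := by
    rw [← mul_inv, Real.mul_self_sqrt hDpos.le]
  have hwp' : wp ⬝ᵥ (M *ᵥ wp) = (q + 2 * b * s + b ^ 2 * r) / D := by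
    rw [hwp, hsum, Matrix.mulVec_smul]
    simp only [smul_dotProduct, dotProduct_smul, smul_eq_mul]
    rw [hT, ← mul_assoc, hc, div_eq_mul_inv]
    ring
  have hrl : -(2 * N * (s - q ^ 2)) ≤ r - q * s := neg_le_of_abs_le hrqs
  have hru : r - q * s ≤ 2 * N * (s - q ^ 2) := le_of_abs_le hrqs
  have hsq' : 0 ≤ s - q ^ 2 := by linarith
  clear_value N b u q s r v D
  constructor
  · intro ha
    have hb0 : 0 ≤ b := by rw [hb]; exact mul_nonneg hα.le ha
    have hbN' : b * N ≤ 1 / 2 := by rwa [abs_of_nonneg hb0] at hbN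
    rw [hwp', le_div_iff₀ hDpos, hDdef]
    nlinarith [mul_nonneg hb0 hsq',
      mul_le_mul_of_nonneg_left hrl (sq_nonneg b),
      mul_le_mul_of_nonneg_right hbN' (mul_nonneg hb0 hsq')]
  · intro ha
    have hb0 : b ≤ 0 := by rw [hb]; exact mul_nonpos_of_nonneg_of_nonpos hα.le ha
    have hbN' : -b * N ≤ 1 / 2 := by rwa [abs_of_nonpos hb0] at hbN
    rw [hwp', div_le_iff₀ hDpos, hDdef]
    nlinarith [mul_nonneg (neg_nonneg.2 hb0) hsq',
      mul_le_mul_of_nonneg_left hru (sq_nonneg b),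
      mul_le_mul_of_nonneg_right hbN' (mul_nonneg (neg_nonneg.2 hb0) hsq')]
end

section
/- Let (a_t) and (q_t) be real sequences with α > 0, q★ > 0, satisfying: sign(a₀) = sign(q₀), |q₀| ≥ q★, a_{t+1} = a_t + (α/2)q_t, and for each t, (q_{t+1} − q_t)·a_t ≥ 0 and q_t does not change sign while sign(a_t) = sign(q₀). Then for all t, sign(a_t) = sign(q₀), |q_t| ≥ q★, and |a_t| ≥ |a₀| + t·(α/2)·q★; hence the first time T with |a_T| ≥ a★ satisfies T ≤ ⌈2(a★ − |a₀|)₊/(α q★)⌉. -/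
lemma phase1_aux_T (a : ℕ → ℝ) (α qstar : ℝ) (hα : 0 < α) (hqstar : 0 < qstar)
    (hgrow : ∀ t : ℕ, |a 0| + t * (α / 2) * qstar ≤ |a t|) :
    ∀ astar : ℝ, ∃ T : ℕ, astar ≤ |a T|
        ∧ T ≤ ⌈2 * max (astar - |a 0|) 0 / (α * qstar)⌉₊ := by
  intro astar
  set T := ⌈2 * max (astar - |a 0|) 0 / (α * qstar)⌉₊ with hT
  refine ⟨T, ?_, le_refl _⟩
  have h1 : 2 * max (astar - |a 0|) 0 / (α * qstar) ≤ (T : ℝ) := Nat.le_ceil _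
  have h2 := hgrow T
  have hαq : 0 < α * qstar := mul_pos hα hqstar
  have hm : astar - |a 0| ≤ max (astar - |a 0|) 0 := le_max_left _ _
  rw [div_le_iff₀ hαq] at h1
  nlinarith

/-- Abstract linear-growth lemma for Phase 1. Given real
sequences `(a_t)`, `(q_t)` with `α > 0`, `q★ > 0`, `sign(a₀) = sign(q₀)`,
`|q₀| ≥ q★`, `a_{t+1} = a_t + (α/2)q_t`, where the increment of `q` has the
sign of `a` (`(q_{t+1} − q_t)·a_t ≥ 0`) and `q` does not change sign while
`sign(a_t) = sign(q₀)`: then for all `t`, `sign(a_t) = sign(q₀)`,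
`|q_t| ≥ q★`, and `|a_t| ≥ |a₀| + t·(α/2)·q★`; hence for any `a★` there is a
time `T` with `|a_T| ≥ a★` and `T ≤ ⌈2(a★ − |a₀|)₊/(α q★)⌉`. -/
theorem phase1_linear_growth (a q : ℕ → ℝ) (α qstar : ℝ)
    (hα : 0 < α) (hqstar : 0 < qstar)
    (hsign0 : Real.sign (a 0) = Real.sign (q 0))
    (hq0 : qstar ≤ |q 0|)
    (hupd : ∀ t, a (t + 1) = a t + (α / 2) * q t)
    (hqmono : ∀ t, 0 ≤ (q (t + 1) - q t) * a t)
    (hqsign : ∀ t, Real.sign (a t) = Real.sign (q 0) →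
        Real.sign (q (t + 1)) = Real.sign (q t)) :
    (∀ t, Real.sign (a t) = Real.sign (q 0)
        ∧ qstar ≤ |q t|
        ∧ |a 0| + t * (α / 2) * qstar ≤ |a t|)
    ∧ ∀ astar : ℝ, ∃ T : ℕ, astar ≤ |a T|
        ∧ T ≤ ⌈2 * max (astar - |a 0|) 0 / (α * qstar)⌉₊ := by
  have hq0ne : q 0 ≠ 0 := by
    intro h
    rw [h, abs_zero] at hq0
    linarith
  rcases lt_or_gt_of_ne hq0ne with hneg | hpos
  · -- q 0 < 0
    have hsq : Real.sign (q 0) = -1 := Real.sign_of_neg hneg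
    have ha0 : a 0 < 0 := by
      rcases lt_trichotomy (a 0) 0 with h | h | h
      · exact h
      · rw [h, Real.sign_zero, hsq] at hsign0; norm_num at hsign0
      · rw [Real.sign_of_pos h, hsq] at hsign0; norm_num at hsign0
    have hq0' : q 0 ≤ -qstar := by
      rw [abs_of_neg hneg] at hq0; linarith
    have key : ∀ t, a t < 0 ∧ q t ≤ -qstar ∧ |a 0| + t * (α / 2) * qstar ≤ -a t := by
      intro t
      induction t with
      | zero => exact ⟨ha0, hq0', by simp [abs_of_neg ha0]⟩
      | succ n ih =>
        obtain ⟨hapos, hq, hgrow⟩ := ih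
        have hqn1 : q (n + 1) ≤ q n := by nlinarith [hqmono n]
        refine ⟨?_, le_trans hqn1 hq, ?_⟩
        · rw [hupd n]; nlinarith
        · rw [hupd n]; push_cast; nlinarith
    have hgrow : ∀ t : ℕ, |a 0| + t * (α / 2) * qstar ≤ |a t| := by
      intro t
      obtain ⟨h1, _, h3⟩ := key t
      rwa [abs_of_neg h1]
    refine ⟨fun t => ?_, phase1_aux_T a α qstar hα hqstar hgrow⟩
    obtain ⟨h1, h2, _⟩ := key t
    refine ⟨by rw [Real.sign_of_neg h1, hsq], ?_, hgrow t⟩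
    have : q t < 0 := by nlinarith
    rw [abs_of_neg this]; linarith
  · -- q 0 > 0
    have hsq : Real.sign (q 0) = 1 := Real.sign_of_pos hpos
    have ha0 : 0 < a 0 := by
      rcases lt_trichotomy (a 0) 0 with h | h | h
      · rw [Real.sign_of_neg h, hsq] at hsign0; norm_num at hsign0
      · rw [h, Real.sign_zero, hsq] at hsign0; norm_num at hsign0
      · exact h
    have hq0' : qstar ≤ q 0 := by rwa [abs_of_pos hpos] at hq0
    have key : ∀ t, 0 < a t ∧ qstar ≤ q t ∧ |a 0| + t * (α / 2) * qstar ≤ a t := by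
      intro t
      induction t with
      | zero => exact ⟨ha0, hq0', by simp [abs_of_pos ha0]⟩
      | succ n ih =>
        obtain ⟨hapos, hq, hgrow⟩ := ih
        have hqn1 : q n ≤ q (n + 1) := by nlinarith [hqmono n]
        refine ⟨?_, le_trans hq hqn1, ?_⟩
        · rw [hupd n]; nlinarith
        · rw [hupd n]; push_cast; nlinarith
    have hgrow : ∀ t : ℕ, |a 0| + t * (α / 2) * qstar ≤ |a t| := by
      intro t
      obtain ⟨h1, _, h3⟩ := key t
      rwa [abs_of_pos h1]
    refine ⟨fun t => ?_, phase1_aux_T a α qstar hα hqstar hgrow⟩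
    obtain ⟨h1, h2, _⟩ := key t
    refine ⟨by rw [Real.sign_of_pos h1, hsq], ?_, hgrow t⟩
    have : 0 < q t := by linarith
    rwa [abs_of_pos this]
end
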